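/- arXiv:1108.1739 — 2 statements merged into one kernel-verified Lean document; each statement's English description precedes it below -/
import Mathlib

section
/- Define p_{m,n} = 3·2^m·C(m+n,m)·∫_0^1 ∫_0^1 (1-a)^3·a^m·(1-(1-a)(1-b))^n/(3-(1-a)(2-b))^{m+n+1} db da for m,n ∈ ℕ. Then ∑_{n=0}^∞ p_{m,n} over n and summation over m,n gives a probability distribution, and the marginal over n satisfies ∑_n p_{m,n} = 3·∫_0^1 ∫_0^1 ((1-a)^3/(1+a))·(2a/(1+a))^m db da. -/
/-!
For `a, b ∈ [0, 1]` put `x = (1 - a)(1 - b)`, so that `3 - (1 - a)(2 - b) = 2 + a - x`. Up to a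
factor free of `n`, `C(m + n, m)` times the `n`-th integrand is `C(m + n, m) t ^ n` with
`t = (1 - x) / (2 + a - x) ∈ [0, 1)`. Since `1 - t = (1 + a) / (2 + a - x)`, the negative binomial
series makes the sum over `n` of `2 ^ m C(m + n, m)` times the integrand equal to
`(1 - a) ^ 3 / (1 + a) * (2a / (1 + a)) ^ m`, which does not depend on `b`. Over `m` this is a
geometric series with sum `(1 - a) ^ 2`, and `3 ∫₀¹ (1 - a) ^ 2 da = 1`. All terms are nonnegative,
so each series is its own majorant in dominated convergence, which moves the sums inside the
integrals.
-/

open MeasureTheory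

noncomputable def stitPmn (m n : ℕ) : ℝ :=
  3 * 2 ^ m * ((m + n).choose m : ℝ) *
    ∫ a in (0:ℝ)..1, ∫ b in (0:ℝ)..1,
      (1 - a) ^ 3 * a ^ m * (1 - (1 - a) * (1 - b)) ^ n / (3 - (1 - a) * (2 - b)) ^ (m + n + 1)

open Set

lemma mem_Icc_of_mem_uIoc {α : Type*} [LinearOrder α] {c d t : α} (hcd : c ≤ d)
    (ht : t ∈ uIoc c d) : t ∈ Icc c d :=
  uIcc_of_le hcd ▸ uIoc_subset_uIcc ht

theorem MeasureTheory.StronglyMeasurable.intervalIntegral_right {α E : Type*} [MeasurableSpace α]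
    [NormedAddCommGroup E] [NormedSpace ℝ E] {f : α → ℝ → E}
    (hf : StronglyMeasurable (Function.uncurry f)) (μ : Measure ℝ) [SFinite μ] (c d : ℝ) :
    StronglyMeasurable fun x => ∫ t in c..d, f x t ∂μ :=
  hf.integral_prod_right.sub hf.integral_prod_right

theorem hasSum_intervalIntegral_of_nonneg {ι : Type*} [Countable ι] {μ : Measure ℝ}
    {F : ι → ℝ → ℝ} {f : ℝ → ℝ} {a b : ℝ}
    (hF_meas : ∀ n, AEStronglyMeasurable (F n) (μ.restrict (uIoc a b)))
    (hF_nonneg : ∀ n, ∀ t ∈ uIoc a b, 0 ≤ F n t)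
    (h_lim : ∀ t ∈ uIoc a b, HasSum (fun n => F n t) (f t))
    (hf : IntervalIntegrable f μ a b) :
    HasSum (fun n => ∫ t in a..b, F n t ∂μ) (∫ t in a..b, f t ∂μ) := by
  refine intervalIntegral.hasSum_integral_of_dominated_convergence F hF_meas
    (fun n => ae_of_all _ fun t ht => (Real.norm_of_nonneg (hF_nonneg n t ht)).le)
    (ae_of_all _ fun t ht => (h_lim t ht).summable) ?_ (ae_of_all _ h_lim)
  rw [intervalIntegrable_iff] at hf ⊢
  exact hf.congr_fun (fun t ht => (h_lim t ht).tsum_eq.symm) measurableSet_uIoc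

noncomputable def stitIntegrand (m n : ℕ) (a b : ℝ) : ℝ :=
  (1 - a) ^ 3 * a ^ m * (1 - (1 - a) * (1 - b)) ^ n / (3 - (1 - a) * (2 - b)) ^ (m + n + 1)

noncomputable def stitMarginalDensity (m : ℕ) (a : ℝ) : ℝ :=
  (1 - a) ^ 3 / (1 + a) * (2 * a / (1 + a)) ^ m

lemma stitPmn_eq (m n : ℕ) :
    stitPmn m n = 3 * 2 ^ m * ((m + n).choose m : ℝ) *
      ∫ a in (0:ℝ)..1, ∫ b in (0:ℝ)..1, stitIntegrand m n a b := rfl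

lemma measurable_stitIntegrand (m n : ℕ) : Measurable (Function.uncurry (stitIntegrand m n)) := by
  unfold stitIntegrand Function.uncurry
  fun_prop

lemma stitIntegrand_nonneg (m n : ℕ) {a b : ℝ} (ha : a ∈ Icc (0:ℝ) 1) (hb : b ∈ Icc (0:ℝ) 1) :
    0 ≤ stitIntegrand m n a b := by
  obtain ⟨ha0, ha1⟩ := ha
  obtain ⟨hb0, hb1⟩ := hb
  unfold stitIntegrand
  have : 0 ≤ 1 - (1 - a) * (1 - b) := by nlinarith
  have : 0 ≤ 3 - (1 - a) * (2 - b) := by nlinarith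
  positivity

lemma hasSum_stitIntegrand (m : ℕ) {a b : ℝ} (ha : a ∈ Icc (0:ℝ) 1) (hb : b ∈ Icc (0:ℝ) 1) :
    HasSum (fun n => 2 ^ m * ((m + n).choose m : ℝ) * stitIntegrand m n a b)
      (stitMarginalDensity m a) := by
  obtain ⟨ha0, ha1⟩ := ha
  obtain ⟨hb0, hb1⟩ := hb
  set x := (1 - a) * (1 - b) with hx
  have hx0 : 0 ≤ x := by positivity
  have hx1 : x ≤ 1 := by nlinarith
  have hD : 3 - (1 - a) * (2 - b) = 2 + a - x := by ring
  have hDpos : 0 < 2 + a - x := by linarith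
  have ht : ‖(1 - x) / (2 + a - x)‖ < 1 := by
    rw [Real.norm_of_nonneg (div_nonneg (by linarith) hDpos.le), div_lt_one hDpos]
    linarith
  set t := (1 - x) / (2 + a - x) with ht_def
  set c := 2 ^ m * (1 - a) ^ 3 * a ^ m / (2 + a - x) ^ (m + 1) with hc_def
  have hterm (n : ℕ) :
      2 ^ m * ((m + n).choose m : ℝ) * stitIntegrand m n a b = c * ((n + m).choose m * t ^ n) := by
    unfold stitIntegrand
    rw [hD, ← hx, Nat.add_comm m n, hc_def, ht_def, div_pow]
    field_simp
    ring
  have hsum : c * (1 / (1 - t) ^ (m + 1)) = stitMarginalDensity m a := by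
    have h1t : 1 - t = (1 + a) / (2 + a - x) := by rw [ht_def]; field_simp; ring
    unfold stitMarginalDensity
    have h1a : 0 < 1 + a := by linarith
    rw [h1t, hc_def, div_pow, div_pow, mul_pow]
    field_simp
    ring
  rw [← hsum]
  exact ((hasSum_choose_mul_geometric_of_norm_lt_one m ht).mul_left c).congr_fun hterm

lemma continuousOn_stitMarginalDensity (m : ℕ) :
    ContinuousOn (stitMarginalDensity m) (Icc 0 1) := by
  unfold stitMarginalDensity
  have : ∀ a ∈ Icc (0:ℝ) 1, 1 + a ≠ 0 := fun a ha => by linarith [ha.1]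
  fun_prop (disch := assumption)

lemma hasSum_intervalIntegral_stitIntegrand (m : ℕ) {a : ℝ} (ha : a ∈ Icc (0:ℝ) 1) :
    HasSum (fun n => 2 ^ m * ((m + n).choose m : ℝ) * ∫ b in (0:ℝ)..1, stitIntegrand m n a b)
      (stitMarginalDensity m a) := by
  have h := hasSum_intervalIntegral_of_nonneg (μ := volume) (a := 0) (b := 1)
    (F := fun n b => 2 ^ m * ((m + n).choose m : ℝ) * stitIntegrand m n a b)
    (fun n => (((measurable_stitIntegrand m n).comp measurable_prodMk_left).const_mul
      _).aestronglyMeasurable)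
    (fun n b hb => mul_nonneg (by positivity)
      (stitIntegrand_nonneg m n ha (mem_Icc_of_mem_uIoc zero_le_one hb)))
    (fun b hb => hasSum_stitIntegrand m ha (mem_Icc_of_mem_uIoc zero_le_one hb))
    intervalIntegrable_const
  simpa only [intervalIntegral.integral_const_mul, intervalIntegral.integral_const, sub_zero,
    one_smul] using h

lemma hasSum_stitPmn (m : ℕ) :
    HasSum (fun n => stitPmn m n) (3 * ∫ a in (0:ℝ)..1, stitMarginalDensity m a) := by
  have h := hasSum_intervalIntegral_of_nonneg (μ := volume) (a := 0) (b := 1)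
    (F := fun n a => 2 ^ m * ((m + n).choose m : ℝ) * ∫ b in (0:ℝ)..1, stitIntegrand m n a b)
    (fun n => (((measurable_stitIntegrand m n).stronglyMeasurable.intervalIntegral_right
      volume 0 1).const_mul _).aestronglyMeasurable)
    (fun n a ha => mul_nonneg (by positivity) (intervalIntegral.integral_nonneg zero_le_one
      fun b hb => stitIntegrand_nonneg m n (mem_Icc_of_mem_uIoc zero_le_one ha) hb))
    (fun a ha => hasSum_intervalIntegral_stitIntegrand m (mem_Icc_of_mem_uIoc zero_le_one ha))
    ((continuousOn_stitMarginalDensity m).intervalIntegrable_of_Icc zero_le_one)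
  refine (h.mul_left 3).congr_fun fun n => ?_
  rw [stitPmn_eq, intervalIntegral.integral_const_mul]
  ring

lemma hasSum_stitMarginalDensity {a : ℝ} (ha : a ∈ Icc (0:ℝ) 1) :
    HasSum (fun m => stitMarginalDensity m a) ((1 - a) ^ 2) := by
  obtain ⟨ha0, ha1⟩ := ha
  rcases ha1.eq_or_lt with rfl | ha1
  · simp [stitMarginalDensity, hasSum_zero]
  have h1a : 0 < 1 + a := by linarith
  have hr1 : 2 * a / (1 + a) < 1 := by rw [div_lt_one h1a]; linarith
  have hsum : (1 - a) ^ 3 / (1 + a) * (1 - 2 * a / (1 + a))⁻¹ = (1 - a) ^ 2 := by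
    have h1r : 1 - 2 * a / (1 + a) = (1 - a) / (1 + a) := by field_simp; ring
    have : (1 - a) ≠ 0 := by linarith
    rw [h1r, inv_div]
    field_simp
  rw [← hsum]
  exact (hasSum_geometric_of_lt_one (by positivity) hr1).mul_left _

lemma hasSum_intervalIntegral_stitMarginalDensity :
    HasSum (fun m => ∫ a in (0:ℝ)..1, stitMarginalDensity m a) (1 / 3) := by
  have h := hasSum_intervalIntegral_of_nonneg (μ := volume) (a := 0) (b := 1)
    (F := stitMarginalDensity) (f := fun a => (1 - a) ^ 2)
    (fun m => by unfold stitMarginalDensity; fun_prop)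
    (fun m a ha => by
      obtain ⟨ha0, ha1⟩ := mem_Icc_of_mem_uIoc zero_le_one ha
      have : 0 ≤ 1 - a := by linarith
      unfold stitMarginalDensity
      positivity)
    (fun a ha => hasSum_stitMarginalDensity (mem_Icc_of_mem_uIoc zero_le_one ha))
    (Continuous.intervalIntegrable (by fun_prop) _ _)
  convert h using 1
  norm_num [intervalIntegral.integral_comp_sub_left (fun a => a ^ 2)]

theorem stit_pmn_distribution_and_marginal :
    (∑' m : ℕ, ∑' n : ℕ, stitPmn m n = 1) ∧
    ∀ m : ℕ, ∑' n : ℕ, stitPmn m n =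
      3 * ∫ a in (0:ℝ)..1, ∫ b in (0:ℝ)..1,
        ((1 - a) ^ 3 / (1 + a)) * (2 * a / (1 + a)) ^ m := by
  refine ⟨?_, fun m => ?_⟩
  · calc ∑' m, ∑' n, stitPmn m n = ∑' m, 3 * ∫ a in (0:ℝ)..1, stitMarginalDensity m a :=
          tsum_congr fun m => (hasSum_stitPmn m).tsum_eq
      _ = 1 := by
          rw [tsum_mul_left, hasSum_intervalIntegral_stitMarginalDensity.tsum_eq]
          norm_num
  · simp only [intervalIntegral.integral_const, sub_zero, one_smul]
    exact (hasSum_stitPmn m).tsum_eq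
end

section
/- ∑_{m=0}^∞ m^2·3·∫_0^1 (1-a)^3/(1+a)·(2a/(1+a))^m da = 6·∫_0^1 a(1+3a) da = 9, so the variance of the number of T-type vertices in the relative interior of the typical I-segment equals 9 - 1 = 8. -/
/-!
For `0 ≤ a < 1` put `x = 2a/(1+a) ∈ [0,1)`. Then `1 - x = (1-a)/(1+a)`, and summing
`m² xᵐ = x(1+x)/(1-x)³` against the weight `(1-a)³/(1+a)` gives the density `2a(1+3a)`.
All terms are nonnegative, so sum and integral may be interchanged, and
`3 ∫₀¹ 2a(1+3a) da = 6 · 3/2 = 9`.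
-/

open MeasureTheory Set

lemma hasSum_sq_mul_geometric {r : ℝ} (hr : |r| < 1) :
    HasSum (fun n : ℕ => (n : ℝ) ^ 2 * r ^ n) (r * (1 + r) / (1 - r) ^ 3) := by
  have hr' : ‖r‖ < 1 := by rwa [Real.norm_eq_abs]
  have h1r : (1 : ℝ) - r ≠ 0 := by linarith [le_abs_self r]
  -- `n² = 2·C(n+2,2) - 3n - 2`
  have hsum : r * (1 + r) / (1 - r) ^ 3 =
      2 * (1 / (1 - r) ^ (2 + 1)) - (3 * (r / (1 - r) ^ 2) + 2 * (1 - r)⁻¹) := by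
    field_simp
    ring
  rw [hsum]
  refine (((hasSum_choose_mul_geometric_of_norm_lt_one 2 hr').mul_left 2).sub
    (((hasSum_coe_mul_geometric_of_norm_lt_one hr').mul_left 3).add
      ((hasSum_geometric_of_norm_lt_one hr').mul_left 2))).congr_fun fun n => ?_
  rw [Nat.cast_choose_two]
  push_cast
  ring

lemma hasSum_integral_of_nonneg {α ι : Type*} [MeasurableSpace α] [Countable ι]
    {μ : Measure α} {F : ι → α → ℝ} {f : α → ℝ}
    (hF_meas : ∀ n, AEStronglyMeasurable (F n) μ) (hF_nonneg : ∀ n, 0 ≤ᵐ[μ] F n)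
    (hf : Integrable f μ) (h_lim : ∀ᵐ a ∂μ, HasSum (fun n => F n a) (f a)) :
    HasSum (fun n => ∫ a, F n a ∂μ) (∫ a, f a ∂μ) := by
  refine hasSum_integral_of_dominated_convergence F hF_meas (fun n => ?_)
    (h_lim.mono fun a ha => ha.summable) (hf.congr ?_) h_lim
  · filter_upwards [hF_nonneg n] with a ha using (Real.norm_of_nonneg ha).le
  · filter_upwards [h_lim] with a ha using ha.tsum_eq.symm

lemma hasSum_sq_mul_T_vertex_weight {a : ℝ} (h0 : 0 ≤ a) (h1 : a < 1) :
    HasSum (fun m : ℕ => (m : ℝ) ^ 2 * ((1 - a) ^ 3 / (1 + a) * (2 * a / (1 + a)) ^ m))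
      (2 * (a * (1 + 3 * a))) := by
  have ha : (0 : ℝ) < 1 + a := by linarith
  have hx : |2 * a / (1 + a)| < 1 := by
    rw [abs_of_nonneg (by positivity), div_lt_one ha]; linarith
  have hx' : 1 - 2 * a / (1 + a) = (1 - a) / (1 + a) := by field_simp; ring
  have h1a : (1 : ℝ) - a ≠ 0 := by linarith
  have hsum : 2 * (a * (1 + 3 * a)) = (1 - a) ^ 3 / (1 + a) *
      (2 * a / (1 + a) * (1 + 2 * a / (1 + a)) / (1 - 2 * a / (1 + a)) ^ 3) := by
    rw [hx']
    field_simp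
    ring
  rw [hsum]
  exact ((hasSum_sq_mul_geometric hx).mul_left _).congr_fun fun m => by ring

-- On `Ioc` the pointwise sum would fail at `a = 1`, where every term vanishes.
lemma hasSum_sq_mul_integral_T_vertex_weight :
    HasSum (fun m : ℕ => (m : ℝ) ^ 2 *
        ∫ a in Ioo (0:ℝ) 1, (1 - a) ^ 3 / (1 + a) * (2 * a / (1 + a)) ^ m)
      (2 * ∫ a in Ioo (0:ℝ) 1, a * (1 + 3 * a)) := by
  simpa only [integral_const_mul] using hasSum_integral_of_nonneg (fun m => by fun_prop)
    (fun m => ae_restrict_of_forall_mem measurableSet_Ioo fun a ⟨_, h1⟩ => by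
      have : 0 ≤ 1 - a := by linarith
      positivity)
    ((by fun_prop : Continuous fun a : ℝ => 2 * (a * (1 + 3 * a))).integrableOn_Ioc.mono_set
      Ioo_subset_Ioc_self)
    (ae_restrict_of_forall_mem measurableSet_Ioo fun a ⟨h0, h1⟩ =>
      hasSum_sq_mul_T_vertex_weight h0.le h1)

lemma integral_mul_one_add_three_mul : ∫ a in (0:ℝ)..1, a * (1 + 3 * a) = 3 / 2 := by
  have h : (fun a : ℝ => a * (1 + 3 * a)) = fun a => a + 3 * a ^ 2 := by funext a; ring
  rw [h, intervalIntegral.integral_add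
    ((by fun_prop : Continuous fun a : ℝ => a).intervalIntegrable _ _)
    ((by fun_prop : Continuous fun a : ℝ => 3 * a ^ 2).intervalIntegrable _ _)]
  norm_num [integral_pow]

theorem stit_second_moment_T_vertices :
    (∑' m : ℕ, (m : ℝ) ^ 2 *
        (3 * ∫ a in (0:ℝ)..1, (1 - a) ^ 3 / (1 + a) * (2 * a / (1 + a)) ^ m)) =
      6 * (∫ a in (0:ℝ)..1, a * (1 + 3 * a)) ∧
    6 * (∫ a in (0:ℝ)..1, a * (1 + 3 * a)) = 9 ∧
    (9 : ℝ) - 1 = 8 := by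
  refine ⟨?_, by rw [integral_mul_one_add_three_mul]; norm_num, by norm_num⟩
  simp only [intervalIntegral.integral_of_le zero_le_one, integral_Ioc_eq_integral_Ioo,
    mul_left_comm _ (3 : ℝ), tsum_mul_left, hasSum_sq_mul_integral_T_vertex_weight.tsum_eq]
  ring
end
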